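/- arXiv:1607.07598 — 2 statements merged into one kernel-verified Lean document; each statement's English description precedes it below -/
import Mathlib

section
/- Suppose S itself has maximum density, i.e., g(A)/f(A) ≤ g(S)/f(S) for all nonempty A ⊆ S. Then every search strategy π has expected cost satisfying g(S)f(S)/2 ≤ c(π) ≤ g(S)f(S). -/
open Finset

def Submodular {n : ℕ} (f : Finset (Fin n) → ℝ) : Prop :=
  ∀ A B : Finset (Fin n), f (A ∪ B) + f (A ∩ B) ≤ f A + f B

def Supermodular {n : ℕ} (g : Finset (Fin n) → ℝ) : Prop :=
  ∀ A B : Finset (Fin n), g A + g B ≤ g (A ∪ B) + g (A ∩ B)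

def MonotoneSet {n : ℕ} (f : Finset (Fin n) → ℝ) : Prop :=
  ∀ A B : Finset (Fin n), A ⊆ B → f A ≤ f B

/-- The set of elements searched up to and including `j` under search `σ`
(where `σ k` is the element searched at position `k`). -/
def searchSegment {n : ℕ} (σ : Equiv.Perm (Fin n)) (j : Fin n) : Finset (Fin n) :=
  Finset.univ.filter (fun i => σ.symm i ≤ σ.symm j)

/-- Expected search searchCost. -/
def searchCost {n : ℕ} (f g : Finset (Fin n) → ℝ) (σ : Equiv.Perm (Fin n)) : ℝ :=
  ∑ j, (g (searchSegment σ j) - g (searchSegment σ j \ {j})) * f (searchSegment σ j)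

def dual {n : ℕ} (g : Finset (Fin n) → ℝ) (A : Finset (Fin n)) : ℝ :=
  g Finset.univ - g Aᶜ

def reversePerm {n : ℕ} (σ : Equiv.Perm (Fin n)) : Equiv.Perm (Fin n) :=
  (Fin.revPerm).trans σ

def InitialSegment {n : ℕ} (σ : Equiv.Perm (Fin n)) (A : Finset (Fin n)) : Prop :=
  ∀ i j : Fin n, j ∈ A → σ.symm i ≤ σ.symm j → i ∈ A


/-!
Order `S` as `π` searches it and let `G m`, `F m` be the values of `g` and `f` on the first `m`
searched elements. The cost is the Riemann–Stieltjes sum `∑ (G (m+1) - G m) F (m+1)` for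
`∫ F dG`. Since `F ≤ f S`, it is at most `g S f S`. Maximum density of `S` gives
`F m ≥ G m f S / g S`, so the cost is at least `f S / g S · ∑ (G (m+1) - G m) G (m+1)`, which
dominates `f S / g S · g S ^ 2 / 2` because `y ^ 2 - x ^ 2 ≤ 2 (y - x) y` for `x ≤ y`.
-/

section StieltjesSum

variable {a b : ℕ → ℝ} {n : ℕ} {B : ℝ}

theorem sum_range_sub_mul_le (ha : Monotone a) (hb : ∀ m < n, b (m + 1) ≤ B) :
    ∑ m ∈ range n, (a (m + 1) - a m) * b (m + 1) ≤ (a n - a 0) * B :=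
  calc ∑ m ∈ range n, (a (m + 1) - a m) * b (m + 1)
      ≤ ∑ m ∈ range n, (a (m + 1) - a m) * B := by
        refine sum_le_sum fun m hm => ?_
        exact mul_le_mul_of_nonneg_left (hb m (mem_range.1 hm)) (sub_nonneg.2 (ha m.le_succ))
    _ = (a n - a 0) * B := by rw [← sum_mul, sum_range_sub]

theorem sq_sub_sq_mul_le_two_mul_sum_range (ha : Monotone a) (hB : 0 ≤ B)
    (hab : ∀ m < n, a (m + 1) * B ≤ a n * b (m + 1)) :
    (a n ^ 2 - a 0 ^ 2) * B ≤ 2 * a n * ∑ m ∈ range n, (a (m + 1) - a m) * b (m + 1) := by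
  rw [← sum_range_sub (fun m => a m ^ 2), sum_mul, mul_sum]
  refine sum_le_sum fun m hm => ?_
  have hstep : a m ≤ a (m + 1) := ha m.le_succ
  have hdensity := hab m (mem_range.1 hm)
  calc (a (m + 1) ^ 2 - a m ^ 2) * B
      = (a (m + 1) - a m) * ((a (m + 1) + a m) * B) := by ring
    _ ≤ (a (m + 1) - a m) * (2 * (a (m + 1) * B)) :=
        mul_le_mul_of_nonneg_left (by nlinarith) (sub_nonneg.2 hstep)
    _ ≤ (a (m + 1) - a m) * (2 * (a n * b (m + 1))) :=
        mul_le_mul_of_nonneg_left (by linarith) (sub_nonneg.2 hstep)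
    _ = 2 * a n * ((a (m + 1) - a m) * b (m + 1)) := by ring

end StieltjesSum

theorem self_mem_searchSegment {n : ℕ} (σ : Equiv.Perm (Fin n)) (j : Fin n) :
    j ∈ searchSegment σ j := by
  simp [searchSegment]

theorem searchCost_nonneg {n : ℕ} {f g : Finset (Fin n) → ℝ}
    (hf : ∀ A : Finset (Fin n), A.Nonempty → 0 ≤ f A) (hg : MonotoneSet g)
    (σ : Equiv.Perm (Fin n)) : 0 ≤ searchCost f g σ :=
  sum_nonneg fun j _ => mul_nonneg (sub_nonneg.2 (hg _ _ sdiff_subset))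
    (hf _ ⟨j, self_mem_searchSegment σ j⟩)

def searchPrefix {n : ℕ} (σ : Equiv.Perm (Fin n)) (m : ℕ) : Finset (Fin n) :=
  univ.filter fun i => (σ.symm i : ℕ) < m

section SearchPrefix

variable {n : ℕ} (σ : Equiv.Perm (Fin n))

@[simp]
theorem mem_searchPrefix {m : ℕ} {i : Fin n} : i ∈ searchPrefix σ m ↔ (σ.symm i : ℕ) < m := by
  simp [searchPrefix]

theorem searchPrefix_zero : searchPrefix σ 0 = ∅ := by
  ext i; simp

theorem searchPrefix_self : searchPrefix σ n = univ := by
  ext i; simp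

theorem searchPrefix_mono : Monotone (searchPrefix σ) := by
  intro m k hmk i hi
  rw [mem_searchPrefix] at hi ⊢
  omega

theorem searchPrefix_succ_nonempty {m : ℕ} (hm : m < n) : (searchPrefix σ (m + 1)).Nonempty :=
  ⟨σ (Fin.mk m hm), by rw [mem_searchPrefix, Equiv.symm_apply_apply]; exact m.lt_succ_self⟩

theorem searchSegment_apply (k : Fin n) : searchSegment σ (σ k) = searchPrefix σ ((k : ℕ) + 1) := by
  ext i
  simp only [searchSegment, mem_filter, mem_univ, true_and, mem_searchPrefix,
    Equiv.symm_apply_apply, Fin.le_def, Nat.lt_succ_iff]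

theorem searchSegment_apply_sdiff (k : Fin n) :
    searchSegment σ (σ k) \ {σ k} = searchPrefix σ k := by
  ext i
  rw [mem_sdiff, searchSegment_apply, mem_searchPrefix, mem_searchPrefix, mem_singleton,
    ← Equiv.symm_apply_eq, Fin.ext_iff]
  omega

theorem searchCost_eq_sum_range (f g : Finset (Fin n) → ℝ) :
    searchCost f g σ = ∑ m ∈ range n,
      (g (searchPrefix σ (m + 1)) - g (searchPrefix σ m)) * f (searchPrefix σ (m + 1)) := by
  rw [searchCost, ← Equiv.sum_comp σ, ← Fin.sum_univ_eq_sum_range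
    (fun m => (g (searchPrefix σ (m + 1)) - g (searchPrefix σ m)) * f (searchPrefix σ (m + 1)))]
  refine sum_congr rfl fun k _ => ?_
  rw [searchSegment_apply_sdiff, searchSegment_apply]

end SearchPrefix

theorem cost_bounds_when_S_maxDensity_general {n : ℕ} (f g : Finset (Fin n) → ℝ)
    (hfmono : MonotoneSet f)
    (hfpos : ∀ A : Finset (Fin n), A.Nonempty → 0 < f A)
    (hgmono : MonotoneSet g) (hg0 : g ∅ = 0)
    (hSmax : ∀ A : Finset (Fin n), A.Nonempty →
      g A / f A ≤ g Finset.univ / f Finset.univ)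
    (π : Equiv.Perm (Fin n)) :
    g Finset.univ * f Finset.univ / 2 ≤ searchCost f g π ∧
      searchCost f g π ≤ g Finset.univ * f Finset.univ := by
  have hG : Monotone (g ∘ searchPrefix π) :=
    fun _ _ hmk => hgmono _ _ (searchPrefix_mono π hmk)
  have hG0 : g (searchPrefix π 0) = 0 := by rw [searchPrefix_zero, hg0]
  have hGn := congrArg g (searchPrefix_self π)
  have hupper := sum_range_sub_mul_le (b := f ∘ searchPrefix π) (n := n) (B := f univ) hG
    fun m _ => hfmono _ _ (subset_univ _)
  simp only [Function.comp_apply, hG0, hGn, sub_zero] at hupper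
  have hnonneg := searchCost_nonneg (fun A hA => (hfpos A hA).le) hgmono π
  rw [searchCost_eq_sum_range] at hnonneg ⊢
  refine ⟨?_, hupper⟩
  rcases (hg0 ▸ hgmono _ _ (empty_subset univ) : 0 ≤ g univ).eq_or_lt with hgS | hgS
  · rwa [← hgS, zero_mul, zero_div]
  have hfS : 0 < f univ := hfpos _ (nonempty_iff_ne_empty.2 fun h => hgS.ne' (by rw [h, hg0]))
  have hdensity : ∀ m < n, g (searchPrefix π (m + 1)) * f univ ≤
      g (searchPrefix π n) * f (searchPrefix π (m + 1)) := fun m hm => by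
    have hA := searchPrefix_succ_nonempty π hm
    rw [hGn]
    exact (div_le_div_iff₀ (hfpos _ hA) hfS).1 (hSmax _ hA)
  have hlower := sq_sub_sq_mul_le_two_mul_sum_range (b := f ∘ searchPrefix π) hG hfS.le hdensity
  simp only [Function.comp_apply, hG0, hGn] at hlower
  nlinarith

/-- Lemma 2: if the whole set has maximum density, every search costs between
`g(S)f(S)/2` and `g(S)f(S)`. -/
theorem cost_bounds_when_S_maxDensity {n : ℕ} (f g : Finset (Fin n) → ℝ)
    (hf : Submodular f) (hfmono : MonotoneSet f) (hf0 : f ∅ = 0)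
    (hfpos : ∀ A : Finset (Fin n), A.Nonempty → 0 < f A)
    (hg : Supermodular g) (hgmono : MonotoneSet g) (hg0 : g ∅ = 0)
    (hgnonneg : ∀ A : Finset (Fin n), 0 ≤ g A)
    (hSmax : ∀ A : Finset (Fin n), A.Nonempty →
      g A / f A ≤ g Finset.univ / f Finset.univ)
    (π : Equiv.Perm (Fin n)) :
    g Finset.univ * f Finset.univ / 2 ≤ searchCost f g π ∧
      searchCost f g π ≤ g Finset.univ * f Finset.univ :=
  cost_bounds_when_S_maxDensity_general f g hfmono hfpos hgmono hg0 hSmax π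
end

section
/- In the submodular search game with modular Hider strategies, every equilibrium (optimal) Hider mixed strategy x lies in the scaled base polyhedron (1/f(S))·B(f), i.e., x(A) ≤ f(A)/f(S) for all A ⊆ S and x(S)=1. -/
open Finset

/-- Expected cost when the Searcher uses permutation `π` and the Hider hides at
`j` with probability `x j`. -/
def gamePayoff {n : ℕ} (f : Finset (Fin n) → ℝ) (π : Equiv.Perm (Fin n))
    (x : Fin n → ℝ) : ℝ :=
  ∑ j, x j * f (searchSegment π j)

/-!
Let `d = max_B x(B)/f(B)` and let `A` be the largest set of density `d`; if `x` leaves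
`(1/f(S)) B(f)` then `d f(S) > 1`. Submodularity and a summation by parts along the search order
show that searching `A` first is never worse, and at a best response `σ` to `x` this exchange is
tight: every `j` with `x j > 0` has `f(S_j ∪ A) = f(S_j)` if `j ∉ A` and `f(S_j ∪ A) = f(A)` if
`j ∈ A`. Hence hiding according to `x` conditioned on `Aᶜ` (if `x(A) < 1`), or at a point `b` with
`f(A ∪ {b}) > f(A)` (if `x(A) = 1`), beats every best response, and mixing a little of it into `x`
raises the Hider's guaranteed payoff, contradicting optimality.
-/

section

variable {n : ℕ}

def prefSet (σ : Equiv.Perm (Fin n)) (k : ℕ) : Finset (Fin n) :=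
  univ.filter fun i => (σ.symm i : ℕ) < k

section prefSet

variable {σ : Equiv.Perm (Fin n)}

@[simp]
lemma mem_prefSet {k : ℕ} {i : Fin n} : i ∈ prefSet σ k ↔ (σ.symm i : ℕ) < k := by
  simp [prefSet]

lemma mem_searchSegment {i j : Fin n} : i ∈ searchSegment σ j ↔ σ.symm i ≤ σ.symm j := by
  simp [searchSegment]

@[simp]
lemma prefSet_zero : prefSet σ 0 = ∅ := by
  ext; simp

@[simp]
lemma prefSet_self : prefSet σ n = univ := by
  ext i; simp

lemma prefSet_mono : Monotone (prefSet σ) := fun _ _ hkl _ hi => by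
  rw [mem_prefSet] at hi ⊢; omega

lemma prefSet_succ (k : Fin n) : prefSet σ (k + 1) = insert (σ k) (prefSet σ k) := by
  ext i
  rw [mem_insert, mem_prefSet, mem_prefSet, Nat.lt_succ_iff_lt_or_eq, Fin.val_eq_val,
    Equiv.symm_apply_eq, eq_comm (a := i), or_comm]

lemma apply_notMem_prefSet (k : Fin n) : σ k ∉ prefSet σ k := by
  simp

lemma searchSegment_eq_prefSet (j : Fin n) :
    searchSegment σ j = prefSet σ (σ.symm j + 1) := by
  ext i
  rw [mem_searchSegment, mem_prefSet, Fin.le_def]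
  omega

lemma insert_subset_searchSegment {b j : Fin n} (hb : b ∉ searchSegment σ j) :
    insert b (searchSegment σ j) ⊆ searchSegment σ b := by
  rw [mem_searchSegment, not_le] at hb
  intro i hi
  rcases mem_insert.mp hi with rfl | hi
  · exact mem_searchSegment.mpr le_rfl
  · exact mem_searchSegment.mpr ((mem_searchSegment.mp hi).trans hb.le)

end prefSet

/-- Summation by parts along the search order. -/
lemma sum_mul_searchSegment (σ : Equiv.Perm (Fin n)) (y : Fin n → ℝ)
    (g : Finset (Fin n) → ℝ) :
    ∑ j, y j * g (searchSegment σ j) = (∑ j, y j) * g univ -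
      ∑ k ∈ range n, (∑ j ∈ prefSet σ k, y j) * (g (prefSet σ (k + 1)) - g (prefSet σ k)) := by
  set Y : ℕ → ℝ := fun k => ∑ j ∈ prefSet σ k, y j
  set G : ℕ → ℝ := fun k => g (prefSet σ k)
  have hstep (k : Fin n) : y (σ k) * g (searchSegment σ (σ k)) = (Y (k + 1) - Y k) * G (k + 1) := by
    simp only [Y, G, prefSet_succ, sum_insert (apply_notMem_prefSet k), searchSegment_eq_prefSet,
      Equiv.symm_apply_apply, add_sub_cancel_right]
  have hparts : ∑ k ∈ range n, (Y (k + 1) - Y k) * G (k + 1) +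
      ∑ k ∈ range n, Y k * (G (k + 1) - G k) = Y n * G n - Y 0 * G 0 := by
    rw [← sum_add_distrib, ← sum_range_sub (fun k => Y k * G k)]
    exact sum_congr rfl fun k _ => by ring
  calc ∑ j, y j * g (searchSegment σ j)
      = ∑ k : Fin n, (Y (k + 1) - Y k) * G (k + 1) := by
        rw [← Equiv.sum_comp σ]; exact sum_congr rfl fun k _ => hstep k
    _ = ∑ k ∈ range n, (Y (k + 1) - Y k) * G (k + 1) :=
        Fin.sum_univ_eq_sum_range (fun k => (Y (k + 1) - Y k) * G (k + 1)) n
    _ = _ := by simp only [Y, G, prefSet_zero, prefSet_self, sum_empty] at hparts ⊢; linarith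

lemma sum_mem_mul_searchSegment (σ : Equiv.Perm (Fin n)) (x : Fin n → ℝ)
    (g : Finset (Fin n) → ℝ) (B : Finset (Fin n)) :
    ∑ j ∈ B, x j * g (searchSegment σ j) = (∑ j ∈ B, x j) * g univ -
      ∑ k ∈ range n, (∑ j ∈ prefSet σ k ∩ B, x j) *
        (g (prefSet σ (k + 1)) - g (prefSet σ k)) := by
  simpa only [ite_mul, zero_mul, sum_ite_mem, univ_inter] using
    sum_mul_searchSegment σ (fun j => if j ∈ B then x j else 0) g

def frontKey (A : Finset (Fin n)) (σ : Equiv.Perm (Fin n)) (j : Fin n) : ℕ :=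
  (if j ∈ A then 0 else n) + σ.symm j

lemma frontKey_injective (A : Finset (Fin n)) (σ : Equiv.Perm (Fin n)) :
    Function.Injective (frontKey A σ) := by
  intro i j h
  have hi := (σ.symm i).isLt
  have hj := (σ.symm j).isLt
  refine σ.symm.injective (Fin.ext ?_)
  unfold frontKey at h
  split_ifs at h <;> omega

/-- Search `A` first and then its complement, each in the order of `σ`. -/
noncomputable def frontPerm (A : Finset (Fin n)) (σ : Equiv.Perm (Fin n)) : Equiv.Perm (Fin n) :=
  Tuple.sort (frontKey A σ)

lemma frontPerm_symm_le_iff (A : Finset (Fin n)) (σ : Equiv.Perm (Fin n)) (i j : Fin n) :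
    (frontPerm A σ).symm i ≤ (frontPerm A σ).symm j ↔ frontKey A σ i ≤ frontKey A σ j := by
  have hmono : StrictMono (frontKey A σ ∘ frontPerm A σ) :=
    (Tuple.monotone_sort _).strictMono_of_injective
      ((frontKey_injective A σ).comp (Equiv.injective _))
  simpa using (hmono.le_iff_le (a := (frontPerm A σ).symm i) (b := (frontPerm A σ).symm j)).symm

lemma searchSegment_frontPerm (A : Finset (Fin n)) (σ : Equiv.Perm (Fin n)) (j : Fin n) :
    searchSegment (frontPerm A σ) j =
      if j ∈ A then searchSegment σ j ∩ A else searchSegment σ j ∪ A := by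
  ext i
  have hi := (σ.symm i).isLt
  have hj := (σ.symm j).isLt
  rw [mem_searchSegment, frontPerm_symm_le_iff]
  by_cases hiA : i ∈ A <;> by_cases hjA : j ∈ A <;>
    simp only [frontKey, hiA, hjA, if_true, if_false, mem_inter, mem_union, mem_searchSegment,
      Fin.le_def, and_true, and_false, or_true, or_false, iff_true, iff_false, not_le] <;> omega

lemma gamePayoff_frontPerm (f : Finset (Fin n) → ℝ) (A : Finset (Fin n))
    (σ : Equiv.Perm (Fin n)) (x : Fin n → ℝ) :
    gamePayoff f (frontPerm A σ) x = ∑ j ∈ A, x j * f (searchSegment σ j ∩ A) +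
      ∑ j ∈ Aᶜ, x j * f (searchSegment σ j ∪ A) := by
  rw [gamePayoff, ← sum_add_sum_compl A]
  congr 1 <;> refine sum_congr rfl fun j hj => ?_
  · rw [searchSegment_frontPerm, if_pos hj]
  · rw [searchSegment_frontPerm, if_neg (mem_compl.mp hj)]

section Submodular

variable {f : Finset (Fin n) → ℝ}

lemma MonotoneSet.nonneg (hfmono : MonotoneSet f) (hf0 : f ∅ = 0) (B : Finset (Fin n)) :
    0 ≤ f B :=
  hf0 ▸ hfmono ∅ B (empty_subset B)

lemma Submodular.insert_sub_le (hf : Submodular f) (hfmono : MonotoneSet f)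
    {S T : Finset (Fin n)} (hTS : T ⊆ S) (b : Fin n) :
    f (insert b S) - f S ≤ f (insert b T) - f T := by
  have h := hf (insert b T) S
  rw [insert_union, union_eq_right.mpr hTS] at h
  have := hfmono T (insert b T ∩ S) (subset_inter (subset_insert b T) hTS)
  linarith

lemma Submodular.exists_lt_insert (hf : Submodular f) (hfmono : MonotoneSet f)
    {A C : Finset (Fin n)} (h : f A < f (A ∪ C)) : ∃ b ∈ C, f A < f (insert b A) := by
  by_contra! hC
  refine h.not_ge ?_
  clear h
  induction C using Finset.induction_on with
  | empty => simp
  | insert c C _ ih =>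
    have hstep := hf.insert_sub_le hfmono (subset_union_left (s₁ := A) (s₂ := C)) c
    rw [union_insert]
    linarith [ih fun b hb => hC b (mem_insert_of_mem hb), hC c (mem_insert_self c C)]

end Submodular

lemma sum_range_mul_sub_add_mul_sub (u w : ℕ → ℝ) (m : ℕ)
    (h : ∀ k < m, (u (k + 1) - u k) * (w (k + 1) - w k) = 0) :
    ∑ k ∈ range m, (w k * (u (k + 1) - u k) + u k * (w (k + 1) - w k)) =
      u m * w m - u 0 * w 0 := by
  rw [← sum_range_sub fun k => u k * w k]
  refine sum_congr rfl fun k hk => ?_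
  linear_combination -h k (mem_range.mp hk)

/-- `d = max_B x(B) / f(B)`, with denominators cleared, and `A` is the largest set attaining it. -/
structure IsMaximalDensest (f : Finset (Fin n) → ℝ) (x : Fin n → ℝ) (A : Finset (Fin n))
    (d : ℝ) : Prop where
  sum_le : ∀ B, ∑ j ∈ B, x j ≤ d * f B
  sum_eq : ∑ j ∈ A, x j = d * f A
  subset_of_sum_eq : ∀ B, ∑ j ∈ B, x j = d * f B → B ⊆ A

section Density

variable {f : Finset (Fin n) → ℝ} {x : Fin n → ℝ} {d : ℝ}

lemma sum_union_eq_mul_of_sum_eq (hf : Submodular f) (hd : 0 ≤ d)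
    (hle : ∀ B, ∑ j ∈ B, x j ≤ d * f B) {A B : Finset (Fin n)}
    (hA : ∑ j ∈ A, x j = d * f A) (hB : ∑ j ∈ B, x j = d * f B) :
    ∑ j ∈ A ∪ B, x j = d * f (A ∪ B) := by
  have hsub := mul_le_mul_of_nonneg_left (hf A B) hd
  have := hle (A ∪ B)
  have := hle (A ∩ B)
  have := sum_union_inter (s₁ := A) (s₂ := B) (f := x)
  nlinarith

lemma exists_isMaximalDensest (hf : Submodular f) (hf0 : f ∅ = 0)
    (hfpos : ∀ A : Finset (Fin n), A.Nonempty → 0 < f A) (hx0 : ∀ j, 0 ≤ x j)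
    (hn : (univ : Finset (Fin n)).Nonempty) :
    ∃ A d, A.Nonempty ∧ IsMaximalDensest f x A d := by
  obtain ⟨A₁, hA₁, hmax⟩ := exists_max_image (univ.filter Finset.Nonempty)
    (fun B => (∑ j ∈ B, x j) / f B) ⟨univ, by simpa using hn⟩
  set d := (∑ j ∈ A₁, x j) / f A₁
  have hA₁ne : A₁.Nonempty := (mem_filter.mp hA₁).2
  have hd : 0 ≤ d := div_nonneg (sum_nonneg fun j _ => hx0 j) (hfpos A₁ hA₁ne).le
  have hle (B : Finset (Fin n)) : ∑ j ∈ B, x j ≤ d * f B := by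
    rcases B.eq_empty_or_nonempty with rfl | hB
    · simp [hf0]
    · exact (div_le_iff₀ (hfpos B hB)).mp (hmax B (by simpa using hB))
  obtain ⟨A, hA, hcard⟩ := exists_max_image
    (univ.filter fun B : Finset (Fin n) => B.Nonempty ∧ ∑ j ∈ B, x j = d * f B) card
    ⟨A₁, by simpa [hA₁ne, d] using (div_mul_cancel₀ _ (hfpos A₁ hA₁ne).ne').symm⟩
  simp only [mem_filter, mem_univ, true_and] at hA hcard
  refine ⟨A, d, hA.1, hle, hA.2, fun B hB => ?_⟩
  have hAB := hcard (A ∪ B) ⟨hA.1.mono subset_union_left,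
    sum_union_eq_mul_of_sum_eq hf hd hle hA.2 hB⟩
  rw [eq_of_subset_of_card_le subset_union_left hAB]
  exact subset_union_right

end Density

lemma prefSet_succ_inter_eq_or_union_eq (σ : Equiv.Perm (Fin n)) (A : Finset (Fin n))
    {k : ℕ} (hk : k < n) :
    prefSet σ (k + 1) ∩ A = prefSet σ k ∩ A ∨ prefSet σ (k + 1) ∪ A = prefSet σ k ∪ A := by
  rw [show k = (⟨k, hk⟩ : Fin n) from rfl, prefSet_succ]
  by_cases h : σ ⟨k, hk⟩ ∈ A
  · exact Or.inr (by rw [insert_union, insert_eq_of_mem (mem_union_right _ h)])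
  · exact Or.inl (insert_inter_of_notMem h)

namespace IsMaximalDensest

variable {f : Finset (Fin n) → ℝ} {x : Fin n → ℝ} {A : Finset (Fin n)} {d : ℝ}

lemma sum_sdiff_le (hD : IsMaximalDensest f x A d) (P : Finset (Fin n)) :
    ∑ j ∈ P \ A, x j ≤ d * (f (P ∪ A) - f A) := by
  have h := hD.sum_le (P ∪ A)
  rw [← sdiff_union_self_eq_union, sum_union disjoint_sdiff_self_left, hD.sum_eq,
    sdiff_union_self_eq_union] at h
  linarith

lemma sum_sdiff_eq_zero (hD : IsMaximalDensest f x A d) {P : Finset (Fin n)}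
    (h : ∑ j ∈ P \ A, x j = d * (f (P ∪ A) - f A)) : ∑ j ∈ P \ A, x j = 0 := by
  have hP : P ∪ A ⊆ A := hD.subset_of_sum_eq _ <| by
    rw [← sdiff_union_self_eq_union, sum_union disjoint_sdiff_self_left, hD.sum_eq, h,
      sdiff_union_self_eq_union]
    ring
  rw [sdiff_eq_empty_iff_subset.mpr (union_subset_iff.mp hP).1, sum_empty]

variable (σ : Equiv.Perm (Fin n))

lemma sum_compl_eq :
    ∑ j ∈ Aᶜ, x j * (f A - f (searchSegment σ j ∩ A)) = ∑ k ∈ range n,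
      (∑ j ∈ prefSet σ k \ A, x j) * (f (prefSet σ (k + 1) ∩ A) - f (prefSet σ k ∩ A)) := by
  have h := sum_mem_mul_searchSegment σ x (fun s => f (s ∩ A)) Aᶜ
  simp only [univ_inter, ← sdiff_eq_inter_compl] at h
  simp only [mul_sub, sum_sub_distrib, ← sum_mul, h]
  ring

lemma sum_compl_le (hfmono : MonotoneSet f) (hD : IsMaximalDensest f x A d) :
    ∑ j ∈ Aᶜ, x j * (f A - f (searchSegment σ j ∩ A)) ≤ ∑ k ∈ range n,
      d * (f (prefSet σ k ∪ A) - f A) * (f (prefSet σ (k + 1) ∩ A) - f (prefSet σ k ∩ A)) := by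
  rw [sum_compl_eq]
  refine sum_le_sum fun k _ => mul_le_mul_of_nonneg_right (hD.sum_sdiff_le _) ?_
  exact sub_nonneg.mpr (hfmono _ _ (inter_subset_inter_right (prefSet_mono k.le_succ)))

/-- The maximality of `A` makes the previous inequality strict unless both sides vanish. -/
lemma sum_compl_eq_zero (hfmono : MonotoneSet f) (hD : IsMaximalDensest f x A d)
    (h : ∑ k ∈ range n, d * (f (prefSet σ k ∪ A) - f A) *
      (f (prefSet σ (k + 1) ∩ A) - f (prefSet σ k ∩ A)) ≤
        ∑ j ∈ Aᶜ, x j * (f A - f (searchSegment σ j ∩ A))) :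
    ∑ j ∈ Aᶜ, x j * (f A - f (searchSegment σ j ∩ A)) = 0 := by
  have hle := hD.sum_compl_le σ hfmono
  rw [sum_compl_eq] at h hle ⊢
  have hterm := (sum_eq_sum_iff_of_le fun k _ => mul_le_mul_of_nonneg_right
    (hD.sum_sdiff_le _) (sub_nonneg.mpr (hfmono _ _
      (inter_subset_inter_right (prefSet_mono k.le_succ))))).mp (le_antisymm hle h)
  refine sum_eq_zero fun k hk => ?_
  rcases mul_eq_mul_right_iff.mp (hterm k hk) with h | h
  · rw [hD.sum_sdiff_eq_zero h, zero_mul]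
  · rw [h, mul_zero]

lemma le_sum_mem (hfmono : MonotoneSet f) (hf0 : f ∅ = 0) (hD : IsMaximalDensest f x A d) :
    ∑ k ∈ range n,
      d * (f (prefSet σ k ∪ A) - f A) * (f (prefSet σ (k + 1) ∩ A) - f (prefSet σ k ∩ A)) ≤
      ∑ j ∈ A, x j * (f (searchSegment σ j ∪ A) - f A) := by
  set u : ℕ → ℝ := fun k => f (prefSet σ k ∩ A)
  set w : ℕ → ℝ := fun k => f (prefSet σ k ∪ A)
  have hform := sum_mem_mul_searchSegment σ x (fun s => f (s ∪ A)) A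
  rw [union_eq_left.mpr (subset_univ A)] at hform
  have hX : ∑ k ∈ range n, (∑ j ∈ prefSet σ k ∩ A, x j) * (w (k + 1) - w k) ≤
      ∑ k ∈ range n, d * u k * (w (k + 1) - w k) :=
    sum_le_sum fun k _ => mul_le_mul_of_nonneg_right (hD.sum_le _) <|
      sub_nonneg.mpr (hfmono _ _ (union_subset_union (prefSet_mono k.le_succ) subset_rfl))
  have hprod : ∑ k ∈ range n, (w k * (u (k + 1) - u k) + u k * (w (k + 1) - w k)) =
      f A * f univ := by
    rw [sum_range_mul_sub_add_mul_sub u w n fun k hk => ?_]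
    · simp [u, w, hf0, union_eq_left.mpr (subset_univ A)]
    · rcases prefSet_succ_inter_eq_or_union_eq σ A hk with h | h
      · simp only [u, h, sub_self, zero_mul]
      · simp only [w, h, sub_self, mul_zero]
  have hu : ∑ k ∈ range n, (u (k + 1) - u k) = f A := by
    rw [sum_range_sub]
    simp [u, hf0]
  have hL : ∑ k ∈ range n, d * (w k - f A) * (u (k + 1) - u k) =
      d * ∑ k ∈ range n, (w k * (u (k + 1) - u k) + u k * (w (k + 1) - w k)) -
        ∑ k ∈ range n, d * u k * (w (k + 1) - w k) -
          d * f A * ∑ k ∈ range n, (u (k + 1) - u k) := by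
    rw [mul_sum, mul_sum, ← sum_sub_distrib, ← sum_sub_distrib]
    exact sum_congr rfl fun k _ => by ring
  have hR : ∑ j ∈ A, x j * (f (searchSegment σ j ∪ A) - f A) =
      ∑ j ∈ A, x j * f (searchSegment σ j ∪ A) - (∑ j ∈ A, x j) * f A := by
    rw [sum_mul, ← sum_sub_distrib]
    exact sum_congr rfl fun j _ => by ring
  rw [hL, hR, hform, hprod, hu, hD.sum_eq]
  linarith

end IsMaximalDensest

def IsBestResponse (f : Finset (Fin n) → ℝ) (x : Fin n → ℝ) (σ : Equiv.Perm (Fin n)) : Prop :=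
  ∀ π, gamePayoff f σ x ≤ gamePayoff f π x

namespace IsBestResponse

variable {f : Finset (Fin n) → ℝ} {x : Fin n → ℝ} {A : Finset (Fin n)} {d : ℝ}
  {σ : Equiv.Perm (Fin n)}

/-- Submodularity, the two density bounds above, submodularity again and the optimality of `σ`
against `frontPerm A σ` form a cycle of inequalities, which forces these sums to vanish. -/
lemma sums_eq_zero (hσ : IsBestResponse f x σ) (hf : Submodular f) (hfmono : MonotoneSet f)
    (hf0 : f ∅ = 0) (hx0 : ∀ j, 0 ≤ x j) (hD : IsMaximalDensest f x A d) :
    ∑ j ∈ Aᶜ, x j * (f (searchSegment σ j ∪ A) - f (searchSegment σ j)) = 0 ∧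
      ∑ j ∈ A, x j * (f (searchSegment σ j ∪ A) - f A) = 0 := by
  have hsub (j : Fin n) := hf (searchSegment σ j) A
  have hcompl_nonneg : 0 ≤ ∑ j ∈ Aᶜ, x j * (f (searchSegment σ j ∪ A) - f (searchSegment σ j)) :=
    sum_nonneg fun j _ => mul_nonneg (hx0 j) (sub_nonneg.mpr (hfmono _ _ subset_union_left))
  have hmem_nonneg : 0 ≤ ∑ j ∈ A, x j * (f (searchSegment σ j ∪ A) - f A) :=
    sum_nonneg fun j _ => mul_nonneg (hx0 j) (sub_nonneg.mpr (hfmono _ _ subset_union_right))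
  have hcompl_le : ∑ j ∈ Aᶜ, x j * (f (searchSegment σ j ∪ A) - f (searchSegment σ j)) ≤
      ∑ j ∈ Aᶜ, x j * (f A - f (searchSegment σ j ∩ A)) :=
    sum_le_sum fun j _ => mul_le_mul_of_nonneg_left (by linarith [hsub j]) (hx0 j)
  have hmem_le : ∑ j ∈ A, x j * (f (searchSegment σ j ∪ A) - f A) ≤
      ∑ j ∈ A, x j * (f (searchSegment σ j) - f (searchSegment σ j ∩ A)) :=
    sum_le_sum fun j _ => mul_le_mul_of_nonneg_left (by linarith [hsub j]) (hx0 j)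
  have hfront : ∑ j ∈ A, x j * (f (searchSegment σ j) - f (searchSegment σ j ∩ A)) ≤
      ∑ j ∈ Aᶜ, x j * (f (searchSegment σ j ∪ A) - f (searchSegment σ j)) := by
    have h := hσ (frontPerm A σ)
    rw [gamePayoff_frontPerm, gamePayoff, ← sum_add_sum_compl A] at h
    simp only [mul_sub, sum_sub_distrib]
    linarith
  have hdens_compl := hD.sum_compl_le σ hfmono
  have hdens_mem := hD.le_sum_mem σ hfmono hf0
  have hzero := hD.sum_compl_eq_zero σ hfmono (by linarith)
  constructor <;> linarith

lemma union_eq_of_notMem (hσ : IsBestResponse f x σ) (hf : Submodular f) (hfmono : MonotoneSet f)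
    (hf0 : f ∅ = 0) (hx0 : ∀ j, 0 ≤ x j) (hD : IsMaximalDensest f x A d) {j : Fin n}
    (hj : j ∉ A) (hxj : x j ≠ 0) : f (searchSegment σ j ∪ A) = f (searchSegment σ j) := by
  have h := (sum_eq_zero_iff_of_nonneg fun i _ => mul_nonneg (hx0 i)
    (sub_nonneg.mpr (hfmono _ _ subset_union_left))).mp
    (hσ.sums_eq_zero hf hfmono hf0 hx0 hD).1 j (mem_compl.mpr hj)
  exact sub_eq_zero.mp ((mul_eq_zero.mp h).resolve_left hxj)

lemma union_eq_of_mem (hσ : IsBestResponse f x σ) (hf : Submodular f) (hfmono : MonotoneSet f)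
    (hf0 : f ∅ = 0) (hx0 : ∀ j, 0 ≤ x j) (hD : IsMaximalDensest f x A d) {j : Fin n}
    (hj : j ∈ A) (hxj : x j ≠ 0) : f (searchSegment σ j ∪ A) = f A := by
  have h := (sum_eq_zero_iff_of_nonneg fun i _ => mul_nonneg (hx0 i)
    (sub_nonneg.mpr (hfmono _ _ subset_union_right))).mp
    (hσ.sums_eq_zero hf hfmono hf0 hx0 hD).2 j hj
  exact sub_eq_zero.mp ((mul_eq_zero.mp h).resolve_left hxj)

end IsBestResponse

open Filter Topology in
lemma exists_iInf_lt_iInf_mix {ι : Type*} [Finite ι] [Nonempty ι] {g h : ι → ℝ}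
    (hgh : ∀ i, (∀ j, g i ≤ g j) → g i < h i) :
    ∃ t ∈ Set.Ioo (0 : ℝ) 1, ⨅ i, g i < ⨅ i, ((1 - t) * g i + t * h i) := by
  have hmin (i : ι) : ⨅ j, g j ≤ g i := ciInf_le (Set.finite_range g).bddBelow i
  have hev : ∀ᶠ t in 𝓝[>] (0 : ℝ), ∀ i, ⨅ j, g j < (1 - t) * g i + t * h i := by
    refine eventually_all.mpr fun i => ?_
    rcases (hmin i).lt_or_eq with hlt | heq
    · have hcont : Continuous fun t : ℝ => (1 - t) * g i + t * h i := by fun_prop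
      refine eventually_nhdsWithin_of_eventually_nhds
        (hcont.continuousAt.eventually (lt_mem_nhds ?_))
      simpa using hlt
    · have hbeat := hgh i fun j => heq ▸ hmin j
      filter_upwards [self_mem_nhdsWithin] with t (ht : 0 < t)
      nlinarith
  obtain ⟨t, hgt, ht⟩ := (hev.and (Ioo_mem_nhdsGT one_pos)).exists
  obtain ⟨i, hi⟩ := exists_eq_ciInf_of_finite (f := fun i => (1 - t) * g i + t * h i)
  exact ⟨t, ht, hi ▸ hgt i⟩

lemma gamePayoff_mix (f : Finset (Fin n) → ℝ) (π : Equiv.Perm (Fin n)) (x y : Fin n → ℝ)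
    (t : ℝ) :
    gamePayoff f π (fun j => (1 - t) * x j + t * y j) =
      (1 - t) * gamePayoff f π x + t * gamePayoff f π y := by
  simp only [gamePayoff, mul_sum, ← sum_add_distrib]
  exact sum_congr rfl fun _ _ => by ring

lemma exists_isBestResponse_le {f : Finset (Fin n) → ℝ} {x y : Fin n → ℝ}
    (hx0 : ∀ j, 0 ≤ x j) (hx1 : ∑ j, x j = 1) (hy0 : ∀ j, 0 ≤ y j) (hy1 : ∑ j, y j = 1)
    (hopt : ∀ y : Fin n → ℝ, (∀ j, 0 ≤ y j) → ∑ j, y j = 1 →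
      (⨅ π : Equiv.Perm (Fin n), gamePayoff f π y) ≤
        ⨅ π : Equiv.Perm (Fin n), gamePayoff f π x) :
    ∃ σ, IsBestResponse f x σ ∧ gamePayoff f σ y ≤ gamePayoff f σ x := by
  by_contra! h
  obtain ⟨t, ⟨ht0, ht1⟩, hlt⟩ := exists_iInf_lt_iInf_mix (g := fun π => gamePayoff f π x)
    (h := fun π => gamePayoff f π y) h
  have hz := hopt (fun j => (1 - t) * x j + t * y j)
    (fun j => by nlinarith [hx0 j, hy0 j])
    (by rw [sum_add_distrib, ← mul_sum, ← mul_sum, hx1, hy1]; ring)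
  simp only [gamePayoff_mix] at hz
  exact hz.not_gt hlt

namespace IsBestResponse

variable {f : Finset (Fin n) → ℝ} {x : Fin n → ℝ} {A : Finset (Fin n)} {d : ℝ}
  {σ : Equiv.Perm (Fin n)}

lemma gamePayoff_lt_of_sum_lt_one (hσ : IsBestResponse f x σ) (hf : Submodular f)
    (hfmono : MonotoneSet f) (hf0 : f ∅ = 0) (hx0 : ∀ j, 0 ≤ x j) (hx1 : ∑ j, x j = 1)
    (hD : IsMaximalDensest f x A d) (hq0 : 0 < ∑ j ∈ A, x j) (hq1 : ∑ j ∈ A, x j < 1) :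
    gamePayoff f σ x <
      gamePayoff f σ (fun j => if j ∈ A then 0 else x j / (1 - ∑ i ∈ A, x i)) := by
  set q := ∑ j ∈ A, x j
  have hcompl : ∑ j ∈ Aᶜ, x j = 1 - q := by
    rw [← hx1, ← sum_add_sum_compl A]; ring
  have hd : 0 < d := pos_of_mul_pos_left (hD.sum_eq ▸ hq0) (hfmono.nonneg hf0 A)
  have hSA : ∑ j ∈ A, x j * f (searchSegment σ j) ≤ q * f A := by
    rw [sum_mul]
    refine sum_le_sum fun j hj => ?_
    rcases eq_or_ne (x j) 0 with hxj | hxj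
    · simp [hxj]
    refine mul_le_mul_of_nonneg_left ?_ (hx0 j)
    rw [← hσ.union_eq_of_mem hf hfmono hf0 hx0 hD hj hxj]
    exact hfmono _ _ subset_union_left
  -- Density of `insert j A` bounds the cost of finding `j ∉ A` from below.
  have hSC : q * (1 - q) + ∑ j ∈ Aᶜ, x j ^ 2 ≤ d * ∑ j ∈ Aᶜ, x j * f (searchSegment σ j) := by
    rw [← hcompl, mul_sum, ← sum_add_distrib, mul_sum]
    refine sum_le_sum fun j hj => ?_
    rcases eq_or_ne (x j) 0 with hxj | hxj
    · simp [hxj]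
    have hjA := mem_compl.mp hj
    have hins : q + x j ≤ ∑ i ∈ searchSegment σ j ∪ A, x i := by
      rw [add_comm, ← sum_insert hjA]
      exact sum_le_sum_of_subset_of_nonneg
        (insert_subset (mem_union_left _ (mem_searchSegment.mpr le_rfl)) subset_union_right)
        fun i _ _ => hx0 i
    have := hD.sum_le (searchSegment σ j ∪ A)
    rw [hσ.union_eq_of_notMem hf hfmono hf0 hx0 hD hjA hxj] at this
    nlinarith [hx0 j]
  have hpos : 0 < ∑ j ∈ Aᶜ, x j ^ 2 := by
    obtain ⟨j, hj, hxj⟩ := exists_ne_zero_of_sum_ne_zero (hcompl ▸ (sub_pos.mpr hq1).ne')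
    exact sum_pos' (fun i _ => sq_nonneg (x i)) ⟨j, hj, pow_pos ((hx0 j).lt_of_ne' hxj) 2⟩
  have hy : gamePayoff f σ (fun j => if j ∈ A then 0 else x j / (1 - q)) =
      (∑ j ∈ Aᶜ, x j * f (searchSegment σ j)) / (1 - q) := by
    rw [gamePayoff, ← sum_add_sum_compl A, sum_div,
      sum_eq_zero fun j hj => by rw [if_pos hj, zero_mul], zero_add]
    exact sum_congr rfl fun j hj => by rw [if_neg (mem_compl.mp hj)]; ring
  rw [hy, gamePayoff, ← sum_add_sum_compl A, lt_div_iff₀ (sub_pos.mpr hq1)]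
  set SA := ∑ j ∈ A, x j * f (searchSegment σ j)
  set SC := ∑ j ∈ Aᶜ, x j * f (searchSegment σ j)
  have hdSA : d * SA ≤ q * q := by
    have hq : q = d * f A := hD.sum_eq
    nlinarith [mul_le_mul_of_nonneg_left hSA hd.le]
  have key : d * (SA * (1 - q)) < d * (q * SC) := by
    nlinarith [mul_le_mul_of_nonneg_right hdSA (sub_pos.mpr hq1).le,
      mul_le_mul_of_nonneg_left hSC hq0.le, mul_pos hq0 hpos]
  nlinarith [lt_of_mul_lt_mul_left key hd.le]

lemma gamePayoff_lt_single (hσ : IsBestResponse f x σ) (hf : Submodular f)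
    (hfmono : MonotoneSet f) (hf0 : f ∅ = 0) (hx0 : ∀ j, 0 ≤ x j) (hx1 : ∑ j, x j = 1)
    (hD : IsMaximalDensest f x A d) (hq : ∑ j ∈ A, x j = 1) {b : Fin n}
    (hb : f A < f (insert b A)) :
    gamePayoff f σ x < gamePayoff f σ (Pi.single b 1) := by
  have hcompl : ∑ j ∈ Aᶜ, x j = 0 := by
    linarith [sum_add_sum_compl A x]
  have hoff : ∀ j ∉ A, x j = 0 := fun j hj =>
    (sum_eq_zero_iff_of_nonneg fun i _ => hx0 i).mp hcompl j (mem_compl.mpr hj)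
  have hlt (j : Fin n) (hxj : x j ≠ 0) : f (searchSegment σ j) < f (searchSegment σ b) := by
    have hj : j ∈ A := by_contra fun hj => hxj (hoff j hj)
    have hU := hσ.union_eq_of_mem hf hfmono hf0 hx0 hD hj hxj
    have hdim := hf.insert_sub_le hfmono (subset_union_left (s₁ := searchSegment σ j) (s₂ := A)) b
    have hins : f (insert b A) ≤ f (insert b (searchSegment σ j ∪ A)) :=
      hfmono _ _ (insert_subset_insert b subset_union_right)
    have hjb : f (searchSegment σ j) < f (insert b (searchSegment σ j)) := by linarith
    have hbj : b ∉ searchSegment σ j := fun hb => by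
      rw [insert_eq_of_mem hb] at hjb; exact hjb.false
    exact hjb.trans_le (hfmono _ _ (insert_subset_searchSegment hbj))
  obtain ⟨j, -, hxj⟩ := exists_ne_zero_of_sum_ne_zero (hx1 ▸ one_ne_zero)
  calc gamePayoff f σ x < ∑ j, x j * f (searchSegment σ b) := by
        refine sum_lt_sum (fun i _ => ?_) ⟨j, mem_univ j,
          mul_lt_mul_of_pos_left (hlt j hxj) ((hx0 j).lt_of_ne' hxj)⟩
        rcases eq_or_ne (x i) 0 with hxi | hxi
        · simp [hxi]
        · exact mul_le_mul_of_nonneg_left (hlt i hxi).le (hx0 i)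
    _ = gamePayoff f σ (Pi.single b 1) := by
        simp [gamePayoff, ← sum_mul, hx1, Pi.single_apply]

end IsBestResponse

lemma IsMaximalDensest.exists_deviation {f : Finset (Fin n) → ℝ} {x : Fin n → ℝ}
    {A : Finset (Fin n)} {d : ℝ} (hD : IsMaximalDensest f x A d) (hf : Submodular f)
    (hfmono : MonotoneSet f) (hf0 : f ∅ = 0) (hx0 : ∀ j, 0 ≤ x j) (hx1 : ∑ j, x j = 1)
    (hA : 0 < f A) (hd : 1 < d * f univ) :
    ∃ y : Fin n → ℝ, (∀ j, 0 ≤ y j) ∧ ∑ j, y j = 1 ∧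
      ∀ σ, IsBestResponse f x σ → gamePayoff f σ x < gamePayoff f σ y := by
  have hd0 : 0 < d := pos_of_mul_pos_left (one_pos.trans hd) (hfmono.nonneg hf0 univ)
  have hq0 : 0 < ∑ j ∈ A, x j := hD.sum_eq ▸ mul_pos hd0 hA
  have hq1 : ∑ j ∈ A, x j ≤ 1 :=
    hx1 ▸ sum_le_sum_of_subset_of_nonneg (subset_univ A) fun j _ _ => hx0 j
  rcases hq1.lt_or_eq with hq1 | hq1
  · have hcompl : ∑ j ∈ Aᶜ, x j = 1 - ∑ j ∈ A, x j := by
      rw [← hx1, ← sum_add_sum_compl A]; ring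
    refine ⟨fun j => if j ∈ A then 0 else x j / (1 - ∑ i ∈ A, x i), fun j => ?_, ?_,
      fun σ hσ => hσ.gamePayoff_lt_of_sum_lt_one hf hfmono hf0 hx0 hx1 hD hq0 hq1⟩
    · dsimp only
      split_ifs
      exacts [le_rfl, div_nonneg (hx0 j) (sub_pos.mpr hq1).le]
    · rw [← sum_add_sum_compl A, sum_eq_zero fun j hj => if_pos hj, zero_add,
        sum_congr rfl fun j hj => if_neg (mem_compl.mp hj), ← sum_div, hcompl,
        div_self (sub_pos.mpr hq1).ne']
  · have hAuniv : f A < f (A ∪ univ) := by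
      rw [union_eq_right.mpr (subset_univ A)]
      have := hD.sum_eq
      nlinarith
    obtain ⟨b, -, hb⟩ := hf.exists_lt_insert hfmono hAuniv
    exact ⟨Pi.single b 1, fun j => by rw [Pi.single_apply]; split_ifs <;> norm_num,
      by simp, fun σ hσ => hσ.gamePayoff_lt_single hf hfmono hf0 hx0 hx1 hD hq1 hb⟩

end

/-- Theorem 6: every equilibrium (maximin) Hider strategy lies in the scaled
base polyhedron `(1/f(S)) B(f)`. -/
theorem hider_equilibrium_in_base_polyhedron {n : ℕ} (f : Finset (Fin n) → ℝ)
    (hf : Submodular f) (hfmono : MonotoneSet f) (hf0 : f ∅ = 0)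
    (hfpos : ∀ A : Finset (Fin n), A.Nonempty → 0 < f A)
    (x : Fin n → ℝ) (hx0 : ∀ j, 0 ≤ x j) (hx1 : ∑ j, x j = 1)
    (hopt : ∀ y : Fin n → ℝ, (∀ j, 0 ≤ y j) → ∑ j, y j = 1 →
      (⨅ π : Equiv.Perm (Fin n), gamePayoff f π y) ≤
        ⨅ π : Equiv.Perm (Fin n), gamePayoff f π x) :
    ∀ A : Finset (Fin n), ∑ j ∈ A, x j ≤ f A / f Finset.univ := by
  intro A₀
  by_contra! hA₀
  have hA₀ne : A₀.Nonempty := nonempty_iff_ne_empty.mpr fun h => by simp [h, hf0] at hA₀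
  have huniv := hfpos univ (hA₀ne.mono (subset_univ A₀))
  obtain ⟨A, d, hAne, hD⟩ := exists_isMaximalDensest hf hf0 hfpos hx0 (hA₀ne.mono (subset_univ A₀))
  have hd : 1 < d * f univ := by
    rw [div_lt_iff₀ huniv] at hA₀
    nlinarith [hD.sum_le A₀, hfpos A₀ hA₀ne]
  obtain ⟨y, hy0, hy1, hbeat⟩ :=
    hD.exists_deviation hf hfmono hf0 hx0 hx1 (hfpos A hAne) hd
  obtain ⟨σ, hσ, hle⟩ := exists_isBestResponse_le hx0 hx1 hy0 hy1 hopt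
  exact hle.not_gt (hbeat σ hσ)
end
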